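/- Assume ∫_Ω H(t,x,y) dy ≤ min(1, C₀ d(x)/√t) for all t > 0 and x ∈ Ω, for some constant C₀ ≥ 1. For every bounded measurable f : Ω → ℝ and every x ∈ Ω at which Λf(x) and Λ(f²)(x) are defined by absolutely convergent integrals, the quantity D(f)(x) := f(x)(Λf)(x) − ½ (Λ(f²))(x) satisfies the identity D(f)(x) = (c₁/2) ∫₀^∞ t^(−3/2) [ ∫_Ω H(t,x,y) (f(x) − f(y))² dy + f(x)² ( 1 − ∫_Ω H(t,x,y) dy ) ] dt, and there exists γ₁ > 0 depending only on C₀ such that D(f)(x) ≥ γ₁ f(x)² / d(x). -/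

import Mathlib

open MeasureTheory Set
open scoped ENNReal RealInnerProductSpace

/-- The normalizing constant `c₁ = (∫₀^∞ (1 − e^(−τ)) τ^(−3/2) dτ)⁻¹`. -/
noncomputable def cOne : ℝ :=
  (∫ τ in Set.Ioi (0:ℝ), (1 - Real.exp (-τ)) * τ ^ (-(3:ℝ)/2))⁻¹

/-- `(Λf)(x) = c₁ ∫₀^∞ t^(−3/2) ( f(x) − ∫_Ω H(t,x,y) f(y) dy ) dt`,
the square root of the Dirichlet Laplacian when `H` is the Dirichlet heat kernel of `Ω`. -/
noncomputable def Lam {d : ℕ} (Ω : Set (EuclideanSpace ℝ (Fin d)))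
    (H : ℝ → EuclideanSpace ℝ (Fin d) → EuclideanSpace ℝ (Fin d) → ℝ)
    (f : EuclideanSpace ℝ (Fin d) → ℝ) (x : EuclideanSpace ℝ (Fin d)) : ℝ :=
  cOne * ∫ t in Set.Ioi (0:ℝ), t ^ (-(3:ℝ)/2) * (f x - ∫ y in Ω, H t x y * f y)

/-- `Λf(x)` is defined by absolutely convergent integrals. -/
def LamDefined {d : ℕ} (Ω : Set (EuclideanSpace ℝ (Fin d)))
    (H : ℝ → EuclideanSpace ℝ (Fin d) → EuclideanSpace ℝ (Fin d) → ℝ)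
    (f : EuclideanSpace ℝ (Fin d) → ℝ) (x : EuclideanSpace ℝ (Fin d)) : Prop :=
  (∀ t ∈ Set.Ioi (0:ℝ), IntegrableOn (fun y => H t x y * f y) Ω) ∧
    IntegrableOn (fun t : ℝ => t ^ (-(3:ℝ)/2) * (f x - ∫ y in Ω, H t x y * f y)) (Set.Ioi 0)

/-!
Expanding `(f(x) − f(y))²` under the kernel gives the identity for `D(f)(x)` pointwise in `t`,
and shows that its integrand is at least `f(x)² (1 − ∫_Ω H(t,x,y) dy) t^(−3/2) ≥ 0`. Once
`√t ≥ 2 C₀ d(x)` the mass bound makes `∫_Ω H(t,x,y) dy ≤ ½`, so the integrand is at least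
`f(x)² t^(−3/2) / 2` there, and integrating this tail alone gives
`D(f)(x) ≥ (c₁/2) · f(x)² / (2 C₀ d(x))`.
-/

lemma integrableOn_one_sub_exp_neg_mul_rpow :
    IntegrableOn (fun τ : ℝ => (1 - Real.exp (-τ)) * τ ^ (-(3:ℝ)/2)) (Ioi 0) := by
  have hmeas : AEStronglyMeasurable (fun τ : ℝ => (1 - Real.exp (-τ)) * τ ^ (-(3:ℝ)/2)) :=
    by fun_prop
  rw [← Ioc_union_Ioi_eq_Ioi zero_le_one]
  refine IntegrableOn.union ?_ ?_
  · have hint : IntegrableOn (fun τ : ℝ => τ ^ (-(1:ℝ)/2)) (Ioc 0 1) := by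
      rw [← intervalIntegrable_iff_integrableOn_Ioc_of_le zero_le_one]
      exact intervalIntegral.intervalIntegrable_rpow' (by norm_num)
    refine hint.mono' hmeas.restrict ?_
    filter_upwards [ae_restrict_mem measurableSet_Ioc] with τ hτ
    replace hτ : 0 < τ := hτ.1
    have hexp : 1 - τ ≤ Real.exp (-τ) := by linarith [Real.add_one_le_exp (-τ)]
    have hexp_le : Real.exp (-τ) ≤ 1 := Real.exp_le_one_iff.mpr (by linarith)
    have hpow : (0:ℝ) < τ ^ (-(3:ℝ)/2) := Real.rpow_pos_of_pos hτ _
    rw [Real.norm_eq_abs, abs_of_nonneg (by nlinarith)]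
    calc (1 - Real.exp (-τ)) * τ ^ (-(3:ℝ)/2) ≤ τ ^ (1:ℝ) * τ ^ (-(3:ℝ)/2) := by
          rw [Real.rpow_one]; nlinarith
      _ = τ ^ (-(1:ℝ)/2) := by rw [← Real.rpow_add hτ]; norm_num
  · refine (integrableOn_Ioi_rpow_of_lt (a := -(3:ℝ)/2) (by norm_num) one_pos).mono'
      hmeas.restrict ?_
    filter_upwards [ae_restrict_mem measurableSet_Ioi] with τ (hτ : 1 < τ)
    have hexp_le : Real.exp (-τ) ≤ 1 := Real.exp_le_one_iff.mpr (by linarith)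
    have hpow : (0:ℝ) < τ ^ (-(3:ℝ)/2) := Real.rpow_pos_of_pos (by linarith) _
    rw [Real.norm_eq_abs, abs_of_nonneg (by nlinarith)]
    nlinarith [Real.exp_pos (-τ)]

lemma cOne_pos : 0 < cOne := by
  refine inv_pos.mpr ?_
  have hpos : ∀ τ ∈ Ioi (0:ℝ), 0 < (1 - Real.exp (-τ)) * τ ^ (-(3:ℝ)/2) := fun τ (hτ : 0 < τ) =>
    mul_pos (sub_pos.mpr (Real.exp_lt_one_iff.mpr (neg_lt_zero.mpr hτ)))
      (Real.rpow_pos_of_pos hτ _)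
  rw [setIntegral_pos_iff_support_of_nonneg_ae ?_ integrableOn_one_sub_exp_neg_mul_rpow]
  · have hsupp : Ioi (0:ℝ) ⊆ Function.support
        (fun τ : ℝ => (1 - Real.exp (-τ)) * τ ^ (-(3:ℝ)/2)) ∩ Ioi 0 :=
      fun τ hτ => ⟨(hpos τ hτ).ne', hτ⟩
    exact (measure_mono hsupp).trans_lt' (by simp)
  · filter_upwards [ae_restrict_mem measurableSet_Ioi] with τ hτ using (hpos τ hτ).le

theorem integral_mul_sub_sq_add_mul_one_sub {α : Type*} [MeasurableSpace α] {μ : Measure α}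
    {k g : α → ℝ} (a : ℝ) (hk : Integrable k μ) (hkg : Integrable (fun y => k y * g y) μ)
    (hkg2 : Integrable (fun y => k y * g y ^ 2) μ) :
    (∫ y, k y * (a - g y) ^ 2 ∂μ) + a ^ 2 * (1 - ∫ y, k y ∂μ)
      = 2 * a * (a - ∫ y, k y * g y ∂μ) - (a ^ 2 - ∫ y, k y * g y ^ 2 ∂μ) := by
  have hexpand : ∀ y, k y * (a - g y) ^ 2 = a ^ 2 * k y - 2 * a * (k y * g y) + k y * g y ^ 2 :=
    fun y => by ring
  have hlin : Integrable (fun y => a ^ 2 * k y - 2 * a * (k y * g y)) μ :=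
    (hk.const_mul _).sub (hkg.const_mul _)
  simp_rw [hexpand]
  rw [integral_add hlin hkg2,
    integral_sub (hk.const_mul _) (hkg.const_mul _), integral_const_mul, integral_const_mul]
  ring

lemma two_div_le_setIntegral_Ioi_of_rpow_le {F : ℝ → ℝ} {s c : ℝ} (hs : 0 < s)
    (hF : IntegrableOn F (Ioi 0)) (hF0 : ∀ t ∈ Ioi 0, 0 ≤ F t)
    (htail : ∀ t ∈ Ioi (s ^ 2), c * t ^ (-(3:ℝ)/2) ≤ F t) :
    2 * c / s ≤ ∫ t in Ioi 0, F t := by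
  have hs2 : 0 < s ^ 2 := by positivity
  have hIoi : ∫ t in Ioi (s ^ 2), t ^ (-(3:ℝ)/2) = 2 / s := by
    rw [integral_Ioi_rpow_of_lt (by norm_num) hs2, ← Real.rpow_natCast, ← Real.rpow_mul hs.le]
    norm_num [Real.rpow_neg_one]
    ring
  calc 2 * c / s = ∫ t in Ioi (s ^ 2), c * t ^ (-(3:ℝ)/2) := by
        rw [integral_const_mul, hIoi]; ring
    _ ≤ ∫ t in Ioi (s ^ 2), F t :=
        setIntegral_mono_on ((integrableOn_Ioi_rpow_of_lt (by norm_num) hs2).const_mul c)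
          (hF.mono_set (Ioi_subset_Ioi hs2.le)) measurableSet_Ioi htail
    _ ≤ ∫ t in Ioi 0, F t :=
        setIntegral_mono_set hF (ae_restrict_of_forall_mem measurableSet_Ioi hF0)
          (Ioi_subset_Ioi hs2.le).eventuallyLE

lemma le_half_of_le_div_sqrt {m b t : ℝ} (hb : 0 < b) (hm : m ≤ b / Real.sqrt t)
    (ht : (2 * b) ^ 2 < t) : m ≤ 1 / 2 := by
  have hsqrt : 2 * b < Real.sqrt t := Real.lt_sqrt_of_sq_lt ht
  refine hm.trans ?_
  rw [div_le_iff₀ (by linarith)]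
  linarith

section Dissipation

variable {d : ℕ} (Ω : Set (EuclideanSpace ℝ (Fin d)))
  (H : ℝ → EuclideanSpace ℝ (Fin d) → EuclideanSpace ℝ (Fin d) → ℝ)
  (f : EuclideanSpace ℝ (Fin d) → ℝ) (x : EuclideanSpace ℝ (Fin d))

noncomputable def dissipationDensity (t : ℝ) : ℝ :=
  t ^ (-(3:ℝ)/2) * ((∫ y in Ω, H t x y * (f x - f y) ^ 2) + f x ^ 2 * (1 - ∫ y in Ω, H t x y))

variable {Ω H f x}

lemma mul_one_sub_integral_le_dissipationDensity {t : ℝ} (ht : 0 < t)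
    (hH : ∀ y, 0 ≤ H t x y) :
    t ^ (-(3:ℝ)/2) * (f x ^ 2 * (1 - ∫ y in Ω, H t x y)) ≤ dissipationDensity Ω H f x t := by
  have hsq : 0 ≤ ∫ y in Ω, H t x y * (f x - f y) ^ 2 :=
    integral_nonneg fun y => mul_nonneg (hH y) (sq_nonneg _)
  unfold dissipationDensity
  gcongr
  exact le_add_of_nonneg_left hsq

lemma dissipationDensity_nonneg {t : ℝ} (ht : 0 < t) (hH : ∀ y, 0 ≤ H t x y)
    (hmass : ∫ y in Ω, H t x y ≤ 1) : 0 ≤ dissipationDensity Ω H f x t :=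
  (mul_nonneg (Real.rpow_pos_of_pos ht _).le
    (mul_nonneg (sq_nonneg _) (sub_nonneg.mpr hmass))).trans
    (mul_one_sub_integral_le_dissipationDensity ht hH)

lemma sq_div_two_mul_rpow_le_dissipationDensity {t : ℝ} (ht : 0 < t) (hH : ∀ y, 0 ≤ H t x y)
    (hmass : ∫ y in Ω, H t x y ≤ 1 / 2) :
    f x ^ 2 / 2 * t ^ (-(3:ℝ)/2) ≤ dissipationDensity Ω H f x t := by
  refine le_trans ?_ (mul_one_sub_integral_le_dissipationDensity ht hH)
  have hgap := mul_nonneg (mul_nonneg (Real.rpow_pos_of_pos ht (-(3:ℝ)/2)).le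
    (sq_nonneg (f x))) (sub_nonneg.mpr hmass)
  linarith

lemma dissipationDensity_eqOn (hH : ∀ t ∈ Ioi (0:ℝ), IntegrableOn (H t x) Ω)
    (hf : LamDefined Ω H f x) (hf2 : LamDefined Ω H (fun y => f y ^ 2) x) :
    EqOn (dissipationDensity Ω H f x)
      (fun t => 2 * f x * (t ^ (-(3:ℝ)/2) * (f x - ∫ y in Ω, H t x y * f y))
        - t ^ (-(3:ℝ)/2) * (f x ^ 2 - ∫ y in Ω, H t x y * f y ^ 2)) (Ioi 0) := by
  intro t ht
  simp only [dissipationDensity]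
  rw [integral_mul_sub_sq_add_mul_one_sub (f x) (hH t ht) (hf.1 t ht) (hf2.1 t ht)]
  ring

lemma integrableOn_dissipationDensity (hH : ∀ t ∈ Ioi (0:ℝ), IntegrableOn (H t x) Ω)
    (hf : LamDefined Ω H f x) (hf2 : LamDefined Ω H (fun y => f y ^ 2) x) :
    IntegrableOn (dissipationDensity Ω H f x) (Ioi 0) :=
  IntegrableOn.congr_fun ((hf.2.const_mul (2 * f x)).sub hf2.2)
    (dissipationDensity_eqOn hH hf hf2).symm measurableSet_Ioi

lemma dissipation_eq_integral_dissipationDensity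
    (hH : ∀ t ∈ Ioi (0:ℝ), IntegrableOn (H t x) Ω)
    (hf : LamDefined Ω H f x) (hf2 : LamDefined Ω H (fun y => f y ^ 2) x) :
    f x * Lam Ω H f x - (1/2) * Lam Ω H (fun y => f y ^ 2) x
      = (cOne / 2) * ∫ t in Ioi 0, dissipationDensity Ω H f x t := by
  rw [setIntegral_congr_fun measurableSet_Ioi (dissipationDensity_eqOn hH hf hf2),
    integral_sub (hf.2.const_mul (2 * f x)) hf2.2, integral_const_mul, Lam, Lam]
  ring

end Dissipation

/-- nonlinear lower bound `D(f)(x) ≥ γ₁ f(x)²/d(x)`.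
Under the mass bound `∫_Ω H(t,x,·) ≤ min(1, C₀ d(x)/√t)`, the dissipation
`D(f)(x) = f(x)Λf(x) − ½Λ(f²)(x)` satisfies the displayed identity and there is
`γ₁ > 0` depending only on `C₀` with `D(f)(x) ≥ γ₁ f(x)²/d(x)`. -/
theorem stmt7 (C₀ : ℝ) (hC₀ : 1 ≤ C₀) :
    ∃ γ₁ : ℝ, 0 < γ₁ ∧
      ∀ (d : ℕ) (Ω : Set (EuclideanSpace ℝ (Fin d))), IsOpen Ω →
      ∀ H : ℝ → EuclideanSpace ℝ (Fin d) → EuclideanSpace ℝ (Fin d) → ℝ,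
        (∀ t x y, 0 ≤ H t x y) →
        (∀ t > (0:ℝ), ∀ x ∈ Ω, IntegrableOn (fun y => H t x y) Ω ∧
          (∫ y in Ω, H t x y) ≤ min 1 (C₀ * Metric.infDist x Ωᶜ / Real.sqrt t)) →
      ∀ f : EuclideanSpace ℝ (Fin d) → ℝ, Measurable f → (∃ C, ∀ x, |f x| ≤ C) →
      ∀ x ∈ Ω, LamDefined Ω H f x → LamDefined Ω H (fun y => f y ^ 2) x →
        f x * Lam Ω H f x - (1/2) * Lam Ω H (fun y => f y ^ 2) x
          = (cOne / 2) * ∫ t in Set.Ioi (0:ℝ), t ^ (-(3:ℝ)/2) *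
              ((∫ y in Ω, H t x y * (f x - f y)^2) +
                f x ^ 2 * (1 - ∫ y in Ω, H t x y)) ∧
        γ₁ * f x ^ 2 / Metric.infDist x Ωᶜ
          ≤ f x * Lam Ω H f x - (1/2) * Lam Ω H (fun y => f y ^ 2) x := by
  have hC₀pos : 0 < C₀ := by linarith
  refine ⟨cOne / (4 * C₀), by have := cOne_pos; positivity, ?_⟩
  intro d Ω _ H hH hmass f _ _ x hx hf hf2
  have hHint : ∀ t ∈ Ioi (0:ℝ), IntegrableOn (H t x) Ω := fun t ht => (hmass t ht x hx).1
  have hD := dissipation_eq_integral_dissipationDensity hHint hf hf2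
  refine ⟨hD, ?_⟩
  have hF0 : ∀ t ∈ Ioi (0:ℝ), 0 ≤ dissipationDensity Ω H f x t := fun t ht =>
    dissipationDensity_nonneg ht (hH t x) ((hmass t ht x hx).2.trans (min_le_left _ _))
  rw [hD]
  rcases (Metric.infDist_nonneg (x := x) (s := Ωᶜ)).eq_or_lt with hδ | hδ
  · -- `infDist x Ωᶜ = 0` happens for `Ω = univ`; division by zero makes the bound `0 ≤ D(f)(x)`.
    rw [← hδ, div_zero]
    exact mul_nonneg (by have := cOne_pos; positivity) (setIntegral_nonneg measurableSet_Ioi hF0)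
  set δ := Metric.infDist x Ωᶜ
  have htail : ∀ t ∈ Ioi ((2 * (C₀ * δ)) ^ 2),
      f x ^ 2 / 2 * t ^ (-(3:ℝ)/2) ≤ dissipationDensity Ω H f x t := by
    intro t (ht : _ < t)
    have htpos : 0 < t := lt_of_le_of_lt (sq_nonneg _) ht
    exact sq_div_two_mul_rpow_le_dissipationDensity htpos (hH t x) (le_half_of_le_div_sqrt
      (by positivity) (((hmass t htpos x hx).2.trans (min_le_right _ _)).trans_eq (by ring)) ht)
  have hlow := two_div_le_setIntegral_Ioi_of_rpow_le (by positivity)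
    (integrableOn_dissipationDensity hHint hf hf2) hF0 htail
  calc cOne / (4 * C₀) * f x ^ 2 / δ = cOne / 2 * (2 * (f x ^ 2 / 2) / (2 * (C₀ * δ))) := by
        field_simp; ring
    _ ≤ _ := mul_le_mul_of_nonneg_left hlow (by have := cOne_pos; positivity)
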